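/- arXiv:2605.25280 — 7 statements merged into one kernel-verified Lean document; each statement's English description precedes it below -/
import Mathlib

section
/- Let A, B ⊂ ℝ^d be finite nonempty point sets with |A| = m, let t* be a translation with CD(A+t*, B) = CDuT(A, B), write OPT = CDuT(A, B), and let (a*, b*) ∈ A × B satisfy ‖a*+t*−b*‖ = min_{(a,b)∈A×B} ‖a+t*−b‖. Then ‖(b*−a*) − t*‖ ≤ OPT / m. -/
open Finset
open scoped Classical

/-- Chamfer distance from finset `A` to finset `B` in `ℝ^d`:
`CD(A,B) = Σ_{a∈A} min_{b∈B} ‖a−b‖` (Euclidean norm). -/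
noncomputable def CD {d : ℕ} (A B : Finset (EuclideanSpace ℝ (Fin d))) : ℝ :=
  ∑ a ∈ A, Metric.infDist a (B : Set (EuclideanSpace ℝ (Fin d)))

/-- The translate `A + t = {a + t : a ∈ A}`. -/
noncomputable def shiftSet {d : ℕ} (A : Finset (EuclideanSpace ℝ (Fin d)))
    (t : EuclideanSpace ℝ (Fin d)) : Finset (EuclideanSpace ℝ (Fin d)) :=
  A.image (· + t)

/-- Chamfer distance under translation: `CDuT(A,B) = inf_{t∈ℝ^d} CD(A+t,B)`. -/
noncomputable def CDuT {d : ℕ} (A B : Finset (EuclideanSpace ℝ (Fin d))) : ℝ :=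
  ⨅ t : EuclideanSpace ℝ (Fin d), CD (shiftSet A t) B

/-- The closest pair `(a*, b*)` under an optimal translation `t*` satisfies
`‖(b*−a*) − t*‖ ≤ OPT/m`. -/
theorem closest_pair_upper_bound {d : ℕ} (A B : Finset (EuclideanSpace ℝ (Fin d)))
    (hA : A.Nonempty) (hB : B.Nonempty) (m : ℕ) (hm : m = A.card)
    (tstar : EuclideanSpace ℝ (Fin d)) (hopt : CD (shiftSet A tstar) B = CDuT A B)
    (astar bstar : EuclideanSpace ℝ (Fin d)) (hastar : astar ∈ A) (hbstar : bstar ∈ B)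
    (hmin : ∀ a ∈ A, ∀ b ∈ B, ‖astar + tstar - bstar‖ ≤ ‖a + tstar - b‖) :
    ‖(bstar - astar) - tstar‖ ≤ CDuT A B / m := by
  set c := ‖astar + tstar - bstar‖ with hc
  have hmpos : 0 < (m : ℝ) := by
    have := hA.card_pos
    exact_mod_cast hm ▸ this
  have hnorm : ‖(bstar - astar) - tstar‖ = c := by
    rw [hc, ← norm_neg]
    congr 1
    abel
  rw [hnorm, le_div_iff₀ hmpos]
  -- show c * m ≤ CDuT A B
  have key : (m : ℝ) * c ≤ CD (shiftSet A tstar) B := by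
    have hsum : CD (shiftSet A tstar) B
        = ∑ a ∈ A, Metric.infDist (a + tstar) (B : Set (EuclideanSpace ℝ (Fin d))) := by
      unfold CD shiftSet
      rw [Finset.sum_image]
      intro x _ y _ h
      simpa using h
    rw [hsum]
    have hbound : ∀ a ∈ A, c ≤ Metric.infDist (a + tstar) (B : Set (EuclideanSpace ℝ (Fin d))) := by
      intro a ha
      obtain ⟨y, hy, hdy⟩ := (B.finite_toSet.isCompact).exists_infDist_eq_dist
        (by exact_mod_cast hB) (a + tstar)
      rw [hdy, dist_eq_norm]
      exact hmin a ha y (by exact_mod_cast hy)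
    calc (m : ℝ) * c = ∑ _a ∈ A, c := by rw [Finset.sum_const, hm]; ring
      _ ≤ _ := Finset.sum_le_sum hbound
  rw [hopt] at key
  linarith
end

section
/- Let A, B ⊂ ℝ^d be finite nonempty point sets with |A| = m, let t* be a translation with CD(A+t*, B) = CDuT(A, B), and write OPT = CDuT(A, B). Then for every k ≥ 0 and every translation t ∈ ℝ^d with ‖t − t*‖ ≤ (k/m)·OPT, one has CD(A+t, B) ≤ (1+k)·OPT. -/
open Finset
open scoped Classical

/-- Every translation `t` with `‖t − t*‖ ≤ (k/m)·OPT` achieves Chamfer cost at most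
`(1+k)·OPT`. -/
theorem approx_near_optimal_translation {d : ℕ} (A B : Finset (EuclideanSpace ℝ (Fin d)))
    (hA : A.Nonempty) (hB : B.Nonempty) (m : ℕ) (hm : m = A.card)
    (tstar : EuclideanSpace ℝ (Fin d)) (hopt : CD (shiftSet A tstar) B = CDuT A B)
    (k : ℝ) (hk : 0 ≤ k) :
    ∀ t : EuclideanSpace ℝ (Fin d), ‖t - tstar‖ ≤ k / m * CDuT A B →
      CD (shiftSet A t) B ≤ (1 + k) * CDuT A B := by
  intro t ht
  have hmpos : (0:ℕ) < m := by
    rw [hm]; exact Finset.card_pos.mpr hA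
  have hmpos' : (0:ℝ) < (m:ℝ) := by exact_mod_cast hmpos
  have hCD : ∀ s : EuclideanSpace ℝ (Fin d),
      CD (shiftSet A s) B = ∑ a ∈ A, Metric.infDist (a + s) (B : Set (EuclideanSpace ℝ (Fin d))) := by
    intro s
    unfold CD shiftSet
    rw [Finset.sum_image]
    intro x _ y _ h
    exact add_right_cancel h
  have key : CD (shiftSet A t) B ≤ CD (shiftSet A tstar) B + m * ‖t - tstar‖ := by
    rw [hCD t, hCD tstar]
    have : ∀ a ∈ A, Metric.infDist (a + t) (B : Set (EuclideanSpace ℝ (Fin d)))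
        ≤ Metric.infDist (a + tstar) (B : Set (EuclideanSpace ℝ (Fin d))) + ‖t - tstar‖ := by
      intro a _
      have := Metric.infDist_le_infDist_add_dist (x := a + t) (y := a + tstar)
        (s := (B : Set (EuclideanSpace ℝ (Fin d))))
      have hd : dist (a + t) (a + tstar) = ‖t - tstar‖ := by
        rw [dist_eq_norm, add_sub_add_left_eq_sub]
      linarith [this, hd.symm ▸ this]
    calc ∑ a ∈ A, Metric.infDist (a + t) (B : Set (EuclideanSpace ℝ (Fin d)))
        ≤ ∑ a ∈ A, (Metric.infDist (a + tstar) (B : Set (EuclideanSpace ℝ (Fin d))) + ‖t - tstar‖) :=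
          Finset.sum_le_sum this
      _ = ∑ a ∈ A, Metric.infDist (a + tstar) (B : Set (EuclideanSpace ℝ (Fin d))) + m * ‖t - tstar‖ := by
          rw [Finset.sum_add_distrib, Finset.sum_const, hm, nsmul_eq_mul]
  have hbound : (m:ℝ) * ‖t - tstar‖ ≤ k * CDuT A B := by
    calc (m:ℝ) * ‖t - tstar‖ ≤ m * (k / m * CDuT A B) :=
          mul_le_mul_of_nonneg_left ht (le_of_lt hmpos')
      _ = k * CDuT A B := by field_simp
  rw [hopt] at key
  linarith
end

section
/- Let A, B ⊂ ℝ^d be finite nonempty point sets with |A| = m ≥ 1, and write OPT = CDuT(A, B). Then OPT ≤ min_{a∈A, b∈B} CD(A + (b−a), B) ≤ (2 − 2/m)·OPT ≤ 2·OPT; i.e., the best translation in the candidate set {b − a : a ∈ A, b ∈ B} achieves Chamfer cost at most twice the optimum. -/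
open Finset
open scoped Classical

lemma CD_shift {d : ℕ} (A B : Finset (EuclideanSpace ℝ (Fin d))) (t : EuclideanSpace ℝ (Fin d)) :
    CD (shiftSet A t) B = ∑ a ∈ A, Metric.infDist (a + t) (B : Set (EuclideanSpace ℝ (Fin d))) := by
  unfold CD shiftSet
  apply Finset.sum_image
  intro x _ y _ h
  exact add_right_cancel h

lemma CD_nonneg {d : ℕ} (A B : Finset (EuclideanSpace ℝ (Fin d))) : 0 ≤ CD A B :=
  Finset.sum_nonneg fun _ _ => Metric.infDist_nonneg

lemma exists_nearest {d : ℕ} (B : Finset (EuclideanSpace ℝ (Fin d))) (hB : B.Nonempty)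
    (x : EuclideanSpace ℝ (Fin d)) :
    ∃ b ∈ B, Metric.infDist x (B : Set (EuclideanSpace ℝ (Fin d))) = dist x b := by
  obtain ⟨b, hb, he⟩ := (B.finite_toSet.isCompact).exists_infDist_eq_dist
    (by exact_mod_cast hB) x
  exact ⟨b, by exact_mod_cast hb, he⟩

lemma key_bound {d : ℕ} (A B : Finset (EuclideanSpace ℝ (Fin d)))
    (hA : A.Nonempty) (hB : B.Nonempty) (hm2 : 2 ≤ A.card)
    (t : EuclideanSpace ℝ (Fin d)) :
    (A ×ˢ B).inf' (hA.product hB) (fun p => CD (shiftSet A (p.2 - p.1)) B)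
      ≤ (2 - 2 / (A.card : ℝ)) * CD (shiftSet A t) B := by
  classical
  set c : EuclideanSpace ℝ (Fin d) → ℝ :=
    fun a => Metric.infDist (a + t) (B : Set (EuclideanSpace ℝ (Fin d))) with hc
  obtain ⟨a₀, ha₀, hmin⟩ := A.exists_min_image c hA
  obtain ⟨b₀, hb₀, hb₀e⟩ := exists_nearest B hB (a₀ + t)
  set g : EuclideanSpace ℝ (Fin d) → ℝ :=
    fun a => Metric.infDist (a + (b₀ - a₀)) (B : Set (EuclideanSpace ℝ (Fin d))) with hg
  set S : ℝ := ∑ a ∈ A, c a with hS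
  set M : ℝ := (A.card : ℝ) with hM
  have hM2 : (2 : ℝ) ≤ M := by rw [hM]; exact_mod_cast hm2
  have hM0 : (0 : ℝ) < M := by linarith
  have hc0 : 0 ≤ c a₀ := Metric.infDist_nonneg
  -- per-term bound
  have hterm : ∀ a ∈ A, g a ≤ c a + c a₀ := by
    intro a ha
    obtain ⟨n, hn, hne⟩ := exists_nearest B hB (a + t)
    have h1 : g a ≤ dist (a + (b₀ - a₀)) n :=
      Metric.infDist_le_dist_of_mem (by exact_mod_cast hn)
    have h2 : dist (a + (b₀ - a₀)) n ≤ dist (a + (b₀ - a₀)) (a + t) + dist (a + t) n :=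
      dist_triangle _ _ _
    have h3 : dist (a + (b₀ - a₀)) (a + t) = dist (a₀ + t) b₀ := by
      simp only [dist_eq_norm]
      rw [show a + (b₀ - a₀) - (a + t) = -(a₀ + t - b₀) by abel, norm_neg]
    have h4 : dist (a + t) n = c a := hne.symm
    calc g a ≤ dist (a + (b₀ - a₀)) (a + t) + dist (a + t) n := le_trans h1 h2
      _ = c a₀ + c a := by rw [h3, h4, ← hb₀e]
      _ = c a + c a₀ := by ring
  have hg0 : g a₀ = 0 := by
    have : a₀ + (b₀ - a₀) = b₀ := by abel
    simp only [hg, this]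
    exact Metric.infDist_zero_of_mem (by exact_mod_cast hb₀)
  -- min * card ≤ sum
  have hMc : M * c a₀ ≤ S := by
    have := Finset.card_nsmul_le_sum A c (c a₀) hmin
    rw [nsmul_eq_mul] at this
    exact this
  -- sum over erase
  have herase_c : ∑ a ∈ A.erase a₀, c a = S - c a₀ := by
    have := Finset.add_sum_erase A c ha₀
    linarith
  have hcard_erase : ((A.erase a₀).card : ℝ) = M - 1 := by
    rw [Finset.card_erase_of_mem ha₀]
    have h1 : 1 ≤ A.card := le_trans (by norm_num) hm2
    push_cast [Nat.cast_sub h1]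
    ring
  have hsum : ∑ a ∈ A, g a ≤ (S - c a₀) + (M - 1) * c a₀ := by
    rw [← Finset.add_sum_erase A g ha₀, hg0, zero_add]
    calc ∑ a ∈ A.erase a₀, g a ≤ ∑ a ∈ A.erase a₀, (c a + c a₀) :=
          Finset.sum_le_sum fun a ha => hterm a (Finset.mem_of_mem_erase ha)
      _ = (∑ a ∈ A.erase a₀, c a) + ((A.erase a₀).card : ℝ) * c a₀ := by
          rw [Finset.sum_add_distrib, Finset.sum_const, nsmul_eq_mul]
      _ = (S - c a₀) + (M - 1) * c a₀ := by rw [herase_c, hcard_erase]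
  -- candidate value
  have hcand : (A ×ˢ B).inf' (hA.product hB) (fun p => CD (shiftSet A (p.2 - p.1)) B)
      ≤ ∑ a ∈ A, g a := by
    have hmem : (a₀, b₀) ∈ A ×ˢ B := Finset.mem_product.2 ⟨ha₀, hb₀⟩
    have := Finset.inf'_le (fun p : _ × _ => CD (shiftSet A (p.2 - p.1)) B) hmem
    rwa [CD_shift] at this
  have hCDt : CD (shiftSet A t) B = S := CD_shift A B t
  rw [hCDt]
  refine le_trans hcand (le_trans hsum ?_)
  -- arithmetic: (S - c₀) + (M-1) c₀ ≤ (2 - 2/M) S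
  have hmul : (M - 2) * (M * c a₀) ≤ (M - 2) * S :=
    mul_le_mul_of_nonneg_left hMc (by linarith)
  have hdiv : 2 * S / M ≤ S - (M - 2) * c a₀ := by
    rw [div_le_iff₀ hM0]; nlinarith [hmul]
  have hrw : (2 - 2 / M) * S = 2 * S - 2 * S / M := by ring
  rw [hrw]
  linarith [hdiv]

/-- The best candidate translation of the form `b − a` is a 2-approximation:
`OPT ≤ min_{a∈A,b∈B} CD(A+(b−a),B) ≤ (2 − 2/m)·OPT ≤ 2·OPT`. -/
theorem candidate_two_approximation {d : ℕ} (A B : Finset (EuclideanSpace ℝ (Fin d)))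
    (hA : A.Nonempty) (hB : B.Nonempty) (m : ℕ) (hm : m = A.card) (hm1 : 1 ≤ m) :
    CDuT A B ≤ (A ×ˢ B).inf' (hA.product hB)
        (fun p => CD (shiftSet A (p.2 - p.1)) B) ∧
    (A ×ˢ B).inf' (hA.product hB) (fun p => CD (shiftSet A (p.2 - p.1)) B)
        ≤ (2 - 2 / (m : ℝ)) * CDuT A B ∧
    (2 - 2 / (m : ℝ)) * CDuT A B ≤ 2 * CDuT A B := by
  have hbdd : BddBelow (Set.range fun t : EuclideanSpace ℝ (Fin d) => CD (shiftSet A t) B) := by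
    refine ⟨0, ?_⟩
    rintro x ⟨t, rfl⟩
    exact CD_nonneg _ _
  have h0 : 0 ≤ CDuT A B := le_ciInf fun t => CD_nonneg _ _
  refine ⟨?_, ?_, ?_⟩
  · apply Finset.le_inf'
    rintro ⟨a, b⟩ _
    exact ciInf_le hbdd (b - a)
  · rcases eq_or_lt_of_le hm1 with h1 | h2
    · -- m = 1
      obtain ⟨a, ha⟩ := Finset.card_eq_one.mp (by omega : A.card = 1)
      obtain ⟨b, hb⟩ := hB
      have hmem : (a, b) ∈ A ×ˢ B := Finset.mem_product.2 ⟨by simp [ha], hb⟩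
      have hval : CD (shiftSet A (b - a)) B = 0 := by
        rw [CD_shift, ha, Finset.sum_singleton, show a + (b - a) = b by abel]
        exact Metric.infDist_zero_of_mem (by exact_mod_cast hb)
      have hle := Finset.inf'_le (fun p : _ × _ => CD (shiftSet A (p.2 - p.1)) B) hmem
      rw [hval] at hle
      have : (2 - 2 / (m : ℝ)) = 0 := by rw [← h1]; norm_num
      rw [this, zero_mul]
      exact hle
    · -- 2 ≤ m
      have hm2 : 2 ≤ A.card := by omega
      have hc : (0 : ℝ) < 2 - 2 / (m : ℝ) := by
        have hm2' : (2 : ℝ) ≤ (m : ℝ) := by exact_mod_cast h2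
        have : 2 / (m : ℝ) ≤ 1 := by
          rw [div_le_one (by linarith)]; linarith
        linarith
      rw [← div_le_iff₀' hc]
      apply le_ciInf
      intro t
      rw [div_le_iff₀' hc]
      have := key_bound A B hA hB hm2 t
      rwa [← hm] at this
  · have h2 : 2 - 2 / (m : ℝ) ≤ 2 := by
      have : (0 : ℝ) ≤ 2 / (m : ℝ) := by positivity
      linarith
    exact mul_le_mul_of_nonneg_right h2 h0
end

section
/- Let A, B ⊂ ℝ^d be finite nonempty point sets with |A| = m, let R > 0, c ≥ 1, let t* be a translation with CD(A+t*, B) = CDuT(A, B), and suppose CDuT(A, B) ≤ R and ‖b_1 − b_2‖ ≥ (c+1)(1 + 2/m)R for all distinct b_1, b_2 ∈ B. For each a ∈ A let b_{a+t*} ∈ B be a nearest neighbor of a+t* in B. Then for every translation t with ‖t − t*‖ ≤ 2R/m, every a ∈ A, and every b' ∈ B with b' ≠ b_{a+t*}, one has ‖a + t − b'‖ ≥ c·‖a + t − b_{a+t*}‖. In particular (since c ≥ 1) b_{a+t*} is also a nearest neighbor of a+t in B for every a ∈ A (alignment), and this nearest neighbor is nearest by a factor of c (c-uniqueness). -/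
open Finset
open scoped Classical

/- Optimality bounds the nearest-neighbour distance of each single point `a + t*` by
`CD(A + t*, B) = CDuT(A, B) ≤ R`, so moving to `t` keeps `a + t` within `(1 + 2/m) R` of
`b_{a+t*}`. Every other point of `B` is `(c + 1)(1 + 2/m) R` away from `b_{a+t*}`, hence,
by the triangle inequality, at least `c (1 + 2/m) R ≥ c ‖a + t − b_{a+t*}‖` away from `a + t`. -/

open Metric

lemma Metric.infDist_eq_dist_of_forall_dist_le {X : Type*} [PseudoMetricSpace X] {s : Set X}
    {x y : X} (hy : y ∈ s) (h : ∀ z ∈ s, dist x y ≤ dist x z) : infDist x s = dist x y :=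
  le_antisymm (infDist_le_dist_of_mem hy) ((le_infDist ⟨y, hy⟩).2 h)

lemma infDist_add_le_CD {d : ℕ} {A : Finset (EuclideanSpace ℝ (Fin d))}
    {a : EuclideanSpace ℝ (Fin d)} (ha : a ∈ A) (B : Finset (EuclideanSpace ℝ (Fin d))) (t : EuclideanSpace ℝ (Fin d)) :
    infDist (a + t) (B : Set (EuclideanSpace ℝ (Fin d))) ≤ CD (shiftSet A t) B := by
  unfold CD shiftSet
  exact single_le_sum (fun x _ => infDist_nonneg (x := x)) (mem_image_of_mem (· + t) ha)

lemma mul_dist_le_dist_of_le_of_mul_le_dist {X : Type*} [PseudoMetricSpace X] {x b b' : X}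
    {ρ c : ℝ} (hc : 0 ≤ c) (hxb : dist x b ≤ ρ) (hb' : (c + 1) * ρ ≤ dist b' b) :
    c * dist x b ≤ dist x b' := by
  have := dist_triangle_left b' b x
  nlinarith

lemma dist_le_of_forall_ne_mul_dist_le {X : Type*} [PseudoMetricSpace X] {s : Set X} {x b : X}
    {c : ℝ} (hc : 1 ≤ c) (h : ∀ b' ∈ s, b' ≠ b → c * dist x b ≤ dist x b') :
    ∀ b' ∈ s, dist x b ≤ dist x b' := by
  intro b' hb'
  rcases eq_or_ne b' b with rfl | hne
  · rfl
  · nlinarith [h b' hb' hne, dist_nonneg (x := x) (y := b)]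

theorem alignment_and_c_uniqueness_general {d : ℕ} (A B : Finset (EuclideanSpace ℝ (Fin d)))
    (m : ℕ)
    (R c : ℝ) (hc : 1 ≤ c)
    (tstar : EuclideanSpace ℝ (Fin d)) (hopt : CD (shiftSet A tstar) B = CDuT A B)
    (hOPT : CDuT A B ≤ R)
    (hsep : ∀ b₁ ∈ B, ∀ b₂ ∈ B, b₁ ≠ b₂ → (c + 1) * (1 + 2 / (m : ℝ)) * R ≤ ‖b₁ - b₂‖)
    (nn : EuclideanSpace ℝ (Fin d) → EuclideanSpace ℝ (Fin d))
    (hnnB : ∀ a ∈ A, nn a ∈ B)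
    (hnn : ∀ a ∈ A, ∀ b ∈ B, ‖a + tstar - nn a‖ ≤ ‖a + tstar - b‖) :
    ∀ t : EuclideanSpace ℝ (Fin d), ‖t - tstar‖ ≤ 2 * R / (m : ℝ) →
      ∀ a ∈ A,
        (∀ b' ∈ B, b' ≠ nn a → c * ‖a + t - nn a‖ ≤ ‖a + t - b'‖) ∧
        (∀ b ∈ B, ‖a + t - nn a‖ ≤ ‖a + t - b‖) := by
  intro t ht a ha
  simp only [← dist_eq_norm] at hsep hnn ht ⊢
  have hnear : dist (a + tstar) (nn a) ≤ R :=
    calc dist (a + tstar) (nn a)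
        = infDist (a + tstar) (B : Set (EuclideanSpace ℝ (Fin d))) :=
          (infDist_eq_dist_of_forall_dist_le (hnnB a ha) (hnn a ha)).symm
      _ ≤ CD (shiftSet A tstar) B := infDist_add_le_CD ha B tstar
      _ ≤ R := hopt ▸ hOPT
  have hmoved : dist (a + t) (nn a) ≤ (1 + 2 / (m : ℝ)) * R :=
    calc dist (a + t) (nn a) ≤ dist (a + t) (a + tstar) + dist (a + tstar) (nn a) :=
          dist_triangle _ _ _
      _ ≤ 2 * R / m + R := add_le_add (by rwa [dist_add_left]) hnear
      _ = (1 + 2 / (m : ℝ)) * R := by ring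
  have huniq : ∀ b' ∈ B, b' ≠ nn a → c * dist (a + t) (nn a) ≤ dist (a + t) b' :=
    fun b' hb' hne => mul_dist_le_dist_of_le_of_mul_le_dist (by linarith) hmoved
      (by rw [← mul_assoc]; exact hsep b' hb' (nn a) (hnnB a ha) hne)
  exact ⟨huniq, dist_le_of_forall_ne_mul_dist_le hc huniq⟩

/-- Alignment and `c`-uniqueness under the separation assumption: if `OPT ≤ R`,
all points of `B` are `(c+1)(1+2/m)R`-separated, and `‖t − t*‖ ≤ 2R/m`, then for each
`a ∈ A` the nearest neighbor `nn a` of `a+t*` is nearest to `a+t` by a factor of `c`,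
and is in particular still a nearest neighbor of `a+t`. -/
theorem alignment_and_c_uniqueness {d : ℕ} (A B : Finset (EuclideanSpace ℝ (Fin d)))
    (hA : A.Nonempty) (hB : B.Nonempty) (m : ℕ) (hm : m = A.card)
    (R c : ℝ) (hR : 0 < R) (hc : 1 ≤ c)
    (tstar : EuclideanSpace ℝ (Fin d)) (hopt : CD (shiftSet A tstar) B = CDuT A B)
    (hOPT : CDuT A B ≤ R)
    (hsep : ∀ b₁ ∈ B, ∀ b₂ ∈ B, b₁ ≠ b₂ → (c + 1) * (1 + 2 / (m : ℝ)) * R ≤ ‖b₁ - b₂‖)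
    (nn : EuclideanSpace ℝ (Fin d) → EuclideanSpace ℝ (Fin d))
    (hnnB : ∀ a ∈ A, nn a ∈ B)
    (hnn : ∀ a ∈ A, ∀ b ∈ B, ‖a + tstar - nn a‖ ≤ ‖a + tstar - b‖) :
    ∀ t : EuclideanSpace ℝ (Fin d), ‖t - tstar‖ ≤ 2 * R / (m : ℝ) →
      ∀ a ∈ A,
        (∀ b' ∈ B, b' ≠ nn a → c * ‖a + t - nn a‖ ≤ ‖a + t - b'‖) ∧
        (∀ b ∈ B, ‖a + t - nn a‖ ≤ ‖a + t - b‖) :=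
  alignment_and_c_uniqueness_general A B m R c hc tstar hopt hOPT hsep nn hnnB hnn
end

section
/- Let A = {a_1, …, a_m} ⊂ ℝ^d be a finite point set, let B ⊂ ℝ^d be finite and nonempty, let t, t' ∈ ℝ^d, for each i let b_{a_i+t} ∈ B be a nearest neighbor of a_i + t in B, and suppose t' is aligned with t, i.e., for every i, b_{a_i+t} is also a nearest neighbor of a_i + t' in B. Let D_t be the family of difference vectors b_{a_i+t} − a_i. Then s_{t'}(D_t) := Σ_{i=1}^m ‖(b_{a_i+t} − a_i) − t'‖ = CD(A+t', B). -/
open Finset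
open scoped Classical

/-- If `t'` is aligned with `t` (each `bnn i`, a nearest neighbor of `a i + t`, is also
a nearest neighbor of `a i + t'`), then `s_{t'}(D_t) = CD(A+t',B)`. -/
theorem aligned_total_distance_eq_chamfer {d m : ℕ}
    (a : Fin m → EuclideanSpace ℝ (Fin d)) (ha : Function.Injective a)
    (A : Finset (EuclideanSpace ℝ (Fin d))) (hA : A = Finset.image a Finset.univ)
    (B : Finset (EuclideanSpace ℝ (Fin d))) (hB : B.Nonempty)
    (t t' : EuclideanSpace ℝ (Fin d))
    (bnn : Fin m → EuclideanSpace ℝ (Fin d)) (hbnnB : ∀ i, bnn i ∈ B)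
    (hbnn : ∀ i, ∀ b ∈ B, ‖a i + t - bnn i‖ ≤ ‖a i + t - b‖)
    (haligned : ∀ i, ∀ b ∈ B, ‖a i + t' - bnn i‖ ≤ ‖a i + t' - b‖) :
    ∑ i : Fin m, ‖(bnn i - a i) - t'‖ = CD (shiftSet A t') B := by
  have hinj : Function.Injective (fun i : Fin m => a i + t') := fun i j h => by
    apply ha; simpa using h
  have hCD : CD (shiftSet A t') B
      = ∑ i : Fin m, Metric.infDist (a i + t') (B : Set (EuclideanSpace ℝ (Fin d))) := by
    rw [CD, shiftSet, hA, Finset.image_image]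
    simp only [Function.comp_def]
    rw [Finset.sum_image (fun i _ j _ h => hinj h)]
  rw [hCD]
  refine Finset.sum_congr rfl fun i _ => ?_
  have h1 : ‖(bnn i - a i) - t'‖ = dist (a i + t') (bnn i) := by
    rw [dist_eq_norm, ← norm_neg]; congr 1; module
  rw [h1]
  refine le_antisymm ?_ (Metric.infDist_le_dist_of_mem (by simpa using hbnnB i))
  by_contra hlt
  push_neg at hlt
  obtain ⟨b, hb, hblt⟩ := (Metric.infDist_lt_iff ⟨bnn i, by simpa using hbnnB i⟩).1 hlt
  have := haligned i b (by simpa using hb)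
  rw [dist_eq_norm, dist_eq_norm] at hblt
  linarith
end

section
/- Let A = {a_1, …, a_m} ⊂ ℝ^d be a finite point set, let B ⊂ ℝ^d be finite and nonempty, let t* be a translation with CD(A+t*, B) = CDuT(A, B), let t ∈ ℝ^d, for each i let b_{a_i+t} ∈ B be a nearest neighbor of a_i + t in B, and suppose t is aligned with t*, i.e., for every i, b_{a_i+t} is also a nearest neighbor of a_i + t* in B. Let D_t be the family of difference vectors b_{a_i+t} − a_i, and let μ ∈ ℝ^d be any geometric median of D_t, i.e., any minimizer over p ∈ ℝ^d of Σ_{i=1}^m ‖(b_{a_i+t} − a_i) − p‖. Then CD(A+μ, B) = CDuT(A, B); that is, every geometric median of D_t is an optimal translation. -/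
open Finset
open scoped Classical

/-- If `t` is aligned with an optimal translation `t*`, then every geometric median `μ`
of the difference family `D_t` is itself an optimal translation:
`CD(A+μ,B) = CDuT(A,B)`. -/
theorem geometric_median_is_optimal {d m : ℕ}
    (a : Fin m → EuclideanSpace ℝ (Fin d)) (ha : Function.Injective a)
    (A : Finset (EuclideanSpace ℝ (Fin d))) (hA : A = Finset.image a Finset.univ)
    (B : Finset (EuclideanSpace ℝ (Fin d))) (hB : B.Nonempty)
    (tstar : EuclideanSpace ℝ (Fin d)) (hopt : CD (shiftSet A tstar) B = CDuT A B)
    (t : EuclideanSpace ℝ (Fin d))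
    (bnn : Fin m → EuclideanSpace ℝ (Fin d)) (hbnnB : ∀ i, bnn i ∈ B)
    (hbnn : ∀ i, ∀ b ∈ B, ‖a i + t - bnn i‖ ≤ ‖a i + t - b‖)
    (haligned : ∀ i, ∀ b ∈ B, ‖a i + tstar - bnn i‖ ≤ ‖a i + tstar - b‖)
    (μ : EuclideanSpace ℝ (Fin d))
    (hμ : ∀ p : EuclideanSpace ℝ (Fin d),
      ∑ i : Fin m, ‖(bnn i - a i) - μ‖ ≤ ∑ i : Fin m, ‖(bnn i - a i) - p‖) :
    CD (shiftSet A μ) B = CDuT A B := by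
  have hCD : ∀ s : EuclideanSpace ℝ (Fin d),
      CD (shiftSet A s) B = ∑ i : Fin m, Metric.infDist (a i + s) (B : Set _) := by
    intro s
    subst hA
    rw [CD, shiftSet, Finset.image_image]
    rw [Finset.sum_image]
    · rfl
    · intro x _ y _ h
      exact ha (by simpa using add_right_cancel (h : a x + s = a y + s))
  have hle : ∀ (s : EuclideanSpace ℝ (Fin d)) (i : Fin m),
      Metric.infDist (a i + s) (B : Set _) ≤ ‖(bnn i - a i) - s‖ := by
    intro s i
    have : ‖(bnn i - a i) - s‖ = dist (a i + s) (bnn i) := by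
      rw [dist_eq_norm]
      rw [show a i + s - bnn i = -((bnn i - a i) - s) by abel, norm_neg]
    rw [this]
    exact Metric.infDist_le_dist_of_mem (by exact_mod_cast hbnnB i)
  have hstar : ∀ i : Fin m,
      Metric.infDist (a i + tstar) (B : Set _) = ‖(bnn i - a i) - tstar‖ := by
    intro i
    refine le_antisymm (hle tstar i) ?_
    rw [show (bnn i - a i) - tstar = -(a i + tstar - bnn i) by abel, norm_neg]
    obtain ⟨b, hb, hbd⟩ := (B.finite_toSet.isCompact).exists_infDist_eq_dist
      (by exact_mod_cast hB) (a i + tstar)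
    rw [hbd, dist_eq_norm]
    exact haligned i b (by exact_mod_cast hb)
  have hbdd : BddBelow (Set.range fun s : EuclideanSpace ℝ (Fin d) => CD (shiftSet A s) B) := by
    refine ⟨0, ?_⟩
    rintro x ⟨s, rfl⟩
    exact Finset.sum_nonneg fun _ _ => Metric.infDist_nonneg
  refine le_antisymm ?_ (ciInf_le hbdd μ)
  calc CD (shiftSet A μ) B ≤ ∑ i : Fin m, ‖(bnn i - a i) - μ‖ := by
        rw [hCD]; exact Finset.sum_le_sum fun i _ => hle μ i
    _ ≤ ∑ i : Fin m, ‖(bnn i - a i) - tstar‖ := hμ tstar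
    _ = CD (shiftSet A tstar) B := by rw [hCD]; exact Finset.sum_congr rfl fun i _ => (hstar i).symm
    _ = CDuT A B := hopt
end

section
/- Let A_1, B_1, …, A_k, B_k ⊂ ℝ^d be finite nonempty point sets of total size n, let Δ be the diameter of ⋃_{i=1}^k (A_i ∪ B_i), let U = 10nΔ, let e_1 be the first standard basis vector of ℝ^d, and define A = ⋃_{i=1}^k (A_i + U·i·e_1) and B = ⋃_{i=1}^k (B_i + U·i·e_1). Then, with respect to the Euclidean norm, CDuT(A, B) = min_{t ∈ ℝ^d} Σ_{i=1}^k CD(A_i + t, B_i); i.e., the combined instance computes the minimum over a common translation of the sum of the individual Chamfer distances, and every optimal translation matches each copy of A_i to the corresponding copy of B_i. -/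
open Finset
open scoped Classical

lemma le_infDist_finset {d : ℕ} (x : EuclideanSpace ℝ (Fin d))
    (S : Finset (EuclideanSpace ℝ (Fin d))) (hS : S.Nonempty) {c : ℝ}
    (h : ∀ y ∈ S, c ≤ dist x y) : c ≤ Metric.infDist x (S : Set (EuclideanSpace ℝ (Fin d))) := by
  obtain ⟨y, hy, hxy⟩ :=
    (S.finite_toSet.isCompact).exists_infDist_eq_dist (Finset.coe_nonempty.mpr hS) x
  rw [hxy]
  exact h y hy

lemma infDist_shift {d : ℕ} (x v : EuclideanSpace ℝ (Fin d))
    (S : Finset (EuclideanSpace ℝ (Fin d))) :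
    Metric.infDist (x + v) ((shiftSet S v : Set (EuclideanSpace ℝ (Fin d))))
      = Metric.infDist x (S : Set (EuclideanSpace ℝ (Fin d))) := by
  rw [shiftSet, Finset.coe_image]
  exact Metric.infDist_image (Isometry.of_dist_eq fun a b => dist_add_right a b v)

lemma CD_shift_sum {d : ℕ} (S T : Finset (EuclideanSpace ℝ (Fin d)))
    (t : EuclideanSpace ℝ (Fin d)) :
    CD (shiftSet S t) T = ∑ x ∈ S, Metric.infDist (x + t) (T : Set (EuclideanSpace ℝ (Fin d))) :=
  Finset.sum_image (fun _ _ _ _ h => add_left_injective t h)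

lemma sum_biUnion_le_of_nonneg {α ι : Type*} [DecidableEq α] (s : Finset ι)
    (t : ι → Finset α) (f : α → ℝ) (hf : ∀ x, 0 ≤ f x) :
    ∑ x ∈ s.biUnion t, f x ≤ ∑ i ∈ s, ∑ x ∈ t i, f x := by
  classical
  induction s using Finset.induction with
  | empty => simp
  | @insert a s ha ih =>
    rw [Finset.biUnion_insert, Finset.sum_insert ha]
    have h1 : ∑ x ∈ t a ∪ s.biUnion t, f x
        = ∑ x ∈ t a, f x + ∑ x ∈ s.biUnion t \ t a, f x := by
      rw [← Finset.sum_union (Finset.disjoint_sdiff), Finset.union_sdiff_self_eq_union]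
    rw [h1]
    have h2 : ∑ x ∈ s.biUnion t \ t a, f x ≤ ∑ x ∈ s.biUnion t, f x :=
      Finset.sum_le_sum_of_subset_of_nonneg (Finset.sdiff_subset) (fun x _ _ => hf x)
    linarith

lemma sub_norm_le_norm_add {d : ℕ} (x y : EuclideanSpace ℝ (Fin d)) :
    ‖x‖ - ‖y‖ ≤ ‖x + y‖ := by
  have h : ‖x‖ ≤ ‖x + y‖ + ‖y‖ := by
    have := norm_sub_le (x + y) y
    simpa using this
  linarith

lemma sum_shiftSet {d : ℕ} (S : Finset (EuclideanSpace ℝ (Fin d)))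
    (v : EuclideanSpace ℝ (Fin d)) (f : EuclideanSpace ℝ (Fin d) → ℝ) :
    ∑ x ∈ shiftSet S v, f x = ∑ x ∈ S, f (x + v) :=
  Finset.sum_image (fun _ _ _ _ h => add_left_injective v h)

set_option maxHeartbeats 1000000 in
/-- Gadget combination: placing the gadgets `A_i`, `B_i` far apart along the first
coordinate axis yields an instance whose Chamfer distance under translation equals
the minimum over a common translation of the sum of the individual Chamfer distances,
and under every optimal translation every point of the copy of `A_i` has all of its
nearest neighbors in the corresponding copy of `B_i`. -/
theorem gadget_combination {d k : ℕ} (hd : 0 < d) (hk : 0 < k)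
    (A B : Fin k → Finset (EuclideanSpace ℝ (Fin d)))
    (hA : ∀ i, (A i).Nonempty) (hB : ∀ i, (B i).Nonempty)
    (n : ℕ) (hn : n = ∑ i : Fin k, ((A i).card + (B i).card))
    (Δ : ℝ) (hΔ : Δ = Metric.diam (⋃ i : Fin k,
      ((A i : Set (EuclideanSpace ℝ (Fin d))) ∪ (B i : Set (EuclideanSpace ℝ (Fin d))))))
    (U : ℝ) (hU : U = 10 * n * Δ)
    (e₁ : EuclideanSpace ℝ (Fin d)) (he₁ : e₁ = EuclideanSpace.single ⟨0, hd⟩ (1 : ℝ))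
    (Abig Bbig : Finset (EuclideanSpace ℝ (Fin d)))
    (hAbig : Abig = Finset.univ.biUnion
      (fun i : Fin k => shiftSet (A i) ((U * ((i : ℕ) + 1)) • e₁)))
    (hBbig : Bbig = Finset.univ.biUnion
      (fun i : Fin k => shiftSet (B i) ((U * ((i : ℕ) + 1)) • e₁))) :
    (CDuT Abig Bbig =
      ⨅ t : EuclideanSpace ℝ (Fin d), ∑ i : Fin k, CD (shiftSet (A i) t) (B i)) ∧
    (∀ t : EuclideanSpace ℝ (Fin d), CD (shiftSet Abig t) Bbig = CDuT Abig Bbig →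
      ∀ i : Fin k, ∀ a ∈ A i, ∀ b ∈ Bbig,
        (∀ b' ∈ Bbig, ‖a + (U * ((i : ℕ) + 1)) • e₁ + t - b‖
            ≤ ‖a + (U * ((i : ℕ) + 1)) • e₁ + t - b'‖) →
        b ∈ shiftSet (B i) ((U * ((i : ℕ) + 1)) • e₁)) := by
  set v : Fin k → EuclideanSpace ℝ (Fin d) := fun i => (U * ((i : ℕ) + 1)) • e₁ with hvdef
  have hAbig' : Abig = Finset.univ.biUnion (fun i : Fin k => shiftSet (A i) (v i)) := hAbig
  have hBbig' : Bbig = Finset.univ.biUnion (fun i : Fin k => shiftSet (B i) (v i)) := hBbig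
  -- basic facts
  have hΔ0 : 0 ≤ Δ := hΔ ▸ Metric.diam_nonneg
  have hn2 : 2 ≤ (n : ℝ) := by
    have h2k : 2 * k ≤ n := by
      rw [hn]
      calc 2 * k = ∑ _i : Fin k, 2 := by simp [mul_comm]
        _ ≤ _ := Finset.sum_le_sum fun i _ => by
            have h1 := Finset.card_pos.mpr (hA i)
            have h2 := Finset.card_pos.mpr (hB i)
            omega
    have : 2 ≤ n := le_trans (by omega) h2k
    exact_mod_cast this
  have hU0 : 0 ≤ U := by rw [hU]; positivity
  have he1n : ‖e₁‖ = 1 := by rw [he₁, EuclideanSpace.norm_single]; norm_num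
  -- all gadget points within Δ
  have hgad : ∀ p ∈ (⋃ i : Fin k, ((A i : Set (EuclideanSpace ℝ (Fin d)))
        ∪ (B i : Set (EuclideanSpace ℝ (Fin d))))),
      ∀ q ∈ (⋃ i : Fin k, ((A i : Set (EuclideanSpace ℝ (Fin d)))
        ∪ (B i : Set (EuclideanSpace ℝ (Fin d))))), dist p q ≤ Δ := by
    intro p hp q hq
    rw [hΔ]
    exact Metric.dist_le_diam_of_mem
      ((Set.finite_iUnion (fun i => ((A i).finite_toSet.union (B i).finite_toSet))).isBounded)
      hp hq
  have hGA : ∀ i, ∀ a ∈ A i, (a : EuclideanSpace ℝ (Fin d)) ∈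
      (⋃ i : Fin k, ((A i : Set (EuclideanSpace ℝ (Fin d)))
        ∪ (B i : Set (EuclideanSpace ℝ (Fin d))))) := by
    intro i a ha; exact Set.mem_iUnion.mpr ⟨i, Or.inl (by exact_mod_cast ha)⟩
  have hGB : ∀ i, ∀ b ∈ B i, (b : EuclideanSpace ℝ (Fin d)) ∈
      (⋃ i : Fin k, ((A i : Set (EuclideanSpace ℝ (Fin d)))
        ∪ (B i : Set (EuclideanSpace ℝ (Fin d))))) := by
    intro i b hb; exact Set.mem_iUnion.mpr ⟨i, Or.inr (by exact_mod_cast hb)⟩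
  have hAB_dist : ∀ i j, ∀ a ∈ A i, ∀ b ∈ B j, dist (a : EuclideanSpace ℝ (Fin d)) b ≤ Δ :=
    fun i j a ha b hb => hgad a (hGA i a ha) b (hGB j b hb)
  -- separation of anchors
  have hvsep : ∀ i j : Fin k, i ≠ j → U ≤ ‖v i - v j‖ := by
    intro i j hij
    have hdiff : v i - v j = (U * (((i : ℕ) : ℝ) - ((j : ℕ) : ℝ))) • e₁ := by
      simp only [hvdef]
      module
    rw [hdiff, norm_smul, Real.norm_eq_abs, he1n, mul_one, abs_mul, abs_of_nonneg hU0]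
    have h1 : (1 : ℝ) ≤ |((i : ℕ) : ℝ) - ((j : ℕ) : ℝ)| := by
      have hne : (i : ℕ) ≠ (j : ℕ) := fun h => hij (Fin.ext h)
      have hcast : ((i : ℕ) : ℝ) - ((j : ℕ) : ℝ) = ((((i : ℕ) : ℤ) - ((j : ℕ) : ℤ) : ℤ) : ℝ) := by
        push_cast; ring
      rw [hcast, ← Int.cast_abs]
      have hZ : ((i : ℕ) : ℤ) ≠ ((j : ℕ) : ℤ) := by exact_mod_cast hne
      have hone : (1 : ℤ) ≤ |((i : ℕ) : ℤ) - ((j : ℕ) : ℤ)| :=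
        Int.one_le_abs (sub_ne_zero.mpr hZ)
      exact_mod_cast hone
    nlinarith
  -- membership in Bbig
  have hmemB : ∀ x : EuclideanSpace ℝ (Fin d), x ∈ Bbig ↔ ∃ j, ∃ q ∈ B j, q + v j = x := by
    intro x
    rw [hBbig']
    simp only [Finset.mem_biUnion, Finset.mem_univ, true_and, shiftSet, Finset.mem_image]
  have hBbigne : Bbig.Nonempty := by
    obtain ⟨q, hq⟩ := hB ⟨0, hk⟩
    exact ⟨q + v ⟨0, hk⟩, (hmemB _).mpr ⟨⟨0, hk⟩, q, hq, rfl⟩⟩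
  -- upper bound : CD combined ≤ sum of individual
  have upper : ∀ t : EuclideanSpace ℝ (Fin d),
      CD (shiftSet Abig t) Bbig ≤ ∑ i, CD (shiftSet (A i) t) (B i) := by
    intro t
    rw [CD_shift_sum, hAbig']
    calc ∑ x ∈ Finset.univ.biUnion (fun i => shiftSet (A i) (v i)),
          Metric.infDist (x + t) (Bbig : Set (EuclideanSpace ℝ (Fin d)))
        ≤ ∑ i, ∑ x ∈ shiftSet (A i) (v i),
            Metric.infDist (x + t) (Bbig : Set (EuclideanSpace ℝ (Fin d))) :=
          sum_biUnion_le_of_nonneg _ _ _ (fun _ => Metric.infDist_nonneg)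
      _ ≤ ∑ i, CD (shiftSet (A i) t) (B i) := by
          refine Finset.sum_le_sum fun i _ => ?_
          rw [sum_shiftSet, CD_shift_sum]
          refine Finset.sum_le_sum fun a ha => ?_
          have hsub : (shiftSet (B i) (v i) : Set (EuclideanSpace ℝ (Fin d)))
              ⊆ (Bbig : Set (EuclideanSpace ℝ (Fin d))) := by
            rw [hBbig']
            exact Finset.coe_subset.mpr (Finset.subset_biUnion_of_mem
              (fun i => shiftSet (B i) (v i)) (Finset.mem_univ i))
          have hne : (shiftSet (B i) (v i) : Set (EuclideanSpace ℝ (Fin d))).Nonempty := by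
            obtain ⟨q, hq⟩ := hB i
            refine ⟨q + v i, ?_⟩
            rw [shiftSet, Finset.coe_image]
            exact ⟨q, Finset.mem_coe.mpr hq, rfl⟩
          calc Metric.infDist (a + v i + t) (Bbig : Set (EuclideanSpace ℝ (Fin d)))
              ≤ Metric.infDist (a + v i + t)
                  (shiftSet (B i) (v i) : Set (EuclideanSpace ℝ (Fin d))) :=
                Metric.infDist_le_infDist_of_subset hsub hne
            _ = Metric.infDist (a + t) ((B i : Set (EuclideanSpace ℝ (Fin d)))) := by
                rw [add_right_comm, infDist_shift]
  -- bddBelow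
  have bdd1 : BddBelow (Set.range fun t : EuclideanSpace ℝ (Fin d) =>
      CD (shiftSet Abig t) Bbig) :=
    by refine ⟨0, ?_⟩; rintro x ⟨t, rfl⟩; exact CD_nonneg _ _
  have bdd2 : BddBelow (Set.range fun t : EuclideanSpace ℝ (Fin d) =>
      ∑ i, CD (shiftSet (A i) t) (B i)) :=
    by refine ⟨0, ?_⟩; rintro x ⟨t, rfl⟩; exact Finset.sum_nonneg fun _ _ => CD_nonneg _ _
  -- value at zero
  have hsum0 : ∑ i, CD (shiftSet (A i) 0) (B i) ≤ n * Δ := by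
    have hterm : ∀ i, CD (shiftSet (A i) 0) (B i) ≤ ((A i).card : ℝ) * Δ := by
      intro i
      rw [CD_shift_sum]
      calc ∑ a ∈ A i, Metric.infDist (a + 0) ((B i : Set (EuclideanSpace ℝ (Fin d))))
          ≤ ∑ _a ∈ A i, Δ := by
            refine Finset.sum_le_sum fun a ha => ?_
            obtain ⟨b, hb⟩ := hB i
            exact le_trans (Metric.infDist_le_dist_of_mem (by exact_mod_cast hb))
              (by rw [add_zero]; exact hAB_dist i i a ha b hb)
        _ = ((A i).card : ℝ) * Δ := by rw [Finset.sum_const, nsmul_eq_mul]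
    have hcard : ∑ i, (A i).card ≤ n := by
      rw [hn]; exact Finset.sum_le_sum fun i _ => Nat.le_add_right _ _
    calc ∑ i, CD (shiftSet (A i) 0) (B i) ≤ ∑ i, ((A i).card : ℝ) * Δ :=
        Finset.sum_le_sum fun i _ => hterm i
      _ = (∑ i, ((A i).card : ℝ)) * Δ := by rw [Finset.sum_mul]
      _ ≤ n * Δ := by
          refine mul_le_mul_of_nonneg_right ?_ hΔ0
          exact_mod_cast hcard
  have hinf_le : (⨅ t : EuclideanSpace ℝ (Fin d), ∑ i, CD (shiftSet (A i) t) (B i)) ≤ n * Δ :=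
    le_trans (ciInf_le bdd2 0) hsum0
  have hCDuT_le : CDuT Abig Bbig ≤ n * Δ :=
    le_trans (ciInf_le bdd1 0) (le_trans (upper 0) hsum0)
  -- far case bound
  have hfarbound : ∀ t : EuclideanSpace ℝ (Fin d), (∃ i, ∀ j, U/4 < ‖v i + t - v j‖) →
      U/4 - Δ ≤ CD (shiftSet Abig t) Bbig := by
    intro t hfar
    obtain ⟨i0, hi0⟩ := hfar
    rw [CD_shift_sum, hAbig']
    have h1 : ∑ x ∈ shiftSet (A i0) (v i0),
          Metric.infDist (x + t) (Bbig : Set (EuclideanSpace ℝ (Fin d)))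
        ≤ ∑ x ∈ Finset.univ.biUnion (fun i => shiftSet (A i) (v i)),
          Metric.infDist (x + t) (Bbig : Set (EuclideanSpace ℝ (Fin d))) :=
      Finset.sum_le_sum_of_subset_of_nonneg
        (Finset.subset_biUnion_of_mem (fun i => shiftSet (A i) (v i)) (Finset.mem_univ i0))
        (fun _ _ _ => Metric.infDist_nonneg)
    refine le_trans ?_ h1
    rw [sum_shiftSet]
    obtain ⟨a0, ha0⟩ := hA i0
    have hterm : ∀ a ∈ A i0, U/4 - Δ ≤
        Metric.infDist (a + v i0 + t) (Bbig : Set (EuclideanSpace ℝ (Fin d))) := by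
      intro a ha
      apply le_infDist_finset _ _ hBbigne
      intro y hy
      obtain ⟨j, q, hq, rfl⟩ := (hmemB y).mp hy
      have hdq : ‖(a : EuclideanSpace ℝ (Fin d)) - q‖ ≤ Δ := by
        have := hAB_dist i0 j a ha q hq
        rwa [dist_eq_norm] at this
      have hrew : a + v i0 + t - (q + v j) = (v i0 + t - v j) + (a - q) := by abel
      have hlow := sub_norm_le_norm_add (v i0 + t - v j) ((a : EuclideanSpace ℝ (Fin d)) - q)
      have hgt := hi0 j
      rw [dist_eq_norm, hrew]
      linarith
    calc U/4 - Δ ≤ Metric.infDist (a0 + v i0 + t) (Bbig : Set (EuclideanSpace ℝ (Fin d))) :=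
        hterm a0 ha0
      _ ≤ ∑ a ∈ A i0, Metric.infDist (a + v i0 + t) (Bbig : Set (EuclideanSpace ℝ (Fin d))) :=
        Finset.single_le_sum
          (f := fun a => Metric.infDist (a + v i0 + t) (Bbig : Set (EuclideanSpace ℝ (Fin d))))
          (fun a _ => Metric.infDist_nonneg) ha0
  -- small translation from near case
  have hsmall : ∀ t : EuclideanSpace ℝ (Fin d),
      (∀ i, ∃ j, ‖v i + t - v j‖ ≤ U/4) → ‖t‖ ≤ U/4 := by
    intro t h
    obtain ⟨j0, hj0⟩ := h ⟨0, hk⟩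
    have e0 : v ⟨0, hk⟩ + t - v j0 = t - (U * ((j0 : ℕ) : ℝ)) • e₁ := by
      simp only [hvdef, Fin.val_mk, Nat.cast_zero]
      module
    rw [e0] at hj0
    rcases eq_or_lt_of_le hU0 with hUz | hUpos
    · rw [← hUz] at hj0 ⊢
      simpa using hj0
    · have hkk : k - 1 < k := by omega
      obtain ⟨j1, hj1⟩ := h ⟨k - 1, hkk⟩
      have hcast : (((k - 1 : ℕ) : ℝ)) = (k : ℝ) - 1 := by
        rw [Nat.cast_sub hk, Nat.cast_one]
      have e1' : v ⟨k - 1, hkk⟩ + t - v j1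
          = t + (U * (((k : ℝ) - 1) - ((j1 : ℕ) : ℝ))) • e₁ := by
        simp only [hvdef, Fin.val_mk, hcast]
        module
      rw [e1'] at hj1
      have hr0 : 0 ≤ ((k : ℝ) - 1) - ((j1 : ℕ) : ℝ) := by
        have hle : (j1 : ℕ) ≤ k - 1 := Nat.le_sub_one_of_lt j1.isLt
        have : ((j1 : ℕ) : ℝ) ≤ ((k - 1 : ℕ) : ℝ) := Nat.cast_le.mpr hle
        rw [hcast] at this
        linarith
      have hcomb : ‖(U * (((j0 : ℕ) : ℝ) + (((k : ℝ) - 1) - ((j1 : ℕ) : ℝ)))) • e₁‖ ≤ U/2 := by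
        have hid : (U * (((j0 : ℕ) : ℝ) + (((k : ℝ) - 1) - ((j1 : ℕ) : ℝ)))) • e₁
            = (t + (U * (((k : ℝ) - 1) - ((j1 : ℕ) : ℝ))) • e₁)
              - (t - (U * ((j0 : ℕ) : ℝ)) • e₁) := by module
        rw [hid]
        calc ‖_ - _‖ ≤ _ + _ := norm_sub_le _ _
          _ ≤ U/4 + U/4 := add_le_add hj1 hj0
          _ = U/2 := by ring
      rw [norm_smul, Real.norm_eq_abs, he1n, mul_one,
        abs_of_nonneg (mul_nonneg hU0 (add_nonneg (Nat.cast_nonneg _) hr0))] at hcomb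
      have hj0le : ((j0 : ℕ) : ℝ) ≤ 1/2 := by nlinarith
      have hj00 : (j0 : ℕ) = 0 := by
        have h1 : ((j0 : ℕ) : ℝ) < 1 := lt_of_le_of_lt hj0le (by norm_num)
        exact_mod_cast Nat.lt_one_iff.mp (by exact_mod_cast h1)
      rw [hj00] at hj0
      simpa using hj0
  -- near-case lower bound
  have hnear_lower : ∀ t : EuclideanSpace ℝ (Fin d), 0 < Δ → ‖t‖ ≤ U/4 →
      ∑ i, CD (shiftSet (A i) t) (B i) ≤ CD (shiftSet Abig t) Bbig := by
    intro t hΔpos ht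
    have hU20 : 20 * Δ ≤ U := by rw [hU]; nlinarith
    have hdisj : ∀ i ∈ (Finset.univ : Finset (Fin k)), ∀ j ∈ (Finset.univ : Finset (Fin k)),
        i ≠ j → Disjoint (shiftSet (A i) (v i)) (shiftSet (A j) (v j)) := by
      intro i _ j _ hij
      rw [Finset.disjoint_left]
      intro x hxi hxj
      obtain ⟨a, ha, rfl⟩ := Finset.mem_image.mp hxi
      obtain ⟨a', ha', heq⟩ := Finset.mem_image.mp hxj
      have hdd : dist (a : EuclideanSpace ℝ (Fin d)) a' ≤ Δ :=
        hgad a (hGA i a ha) a' (hGA j a' ha')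
      have hne : ‖v i - v j‖ = dist (a' : EuclideanSpace ℝ (Fin d)) a := by
        rw [dist_eq_norm]
        have : v i - v j = a' - a := by
          have h := heq
          -- a' + v j = a + v i
          have : a' + v j - (a + v i) = 0 := by rw [heq]; abel
          have h2 : a' - a = v i - v j := by
            have := this
            abel_nf at this ⊢
            linear_combination (norm := module) this
          rw [h2]
        rw [this]
      have hsep := hvsep i j hij
      rw [hne, dist_comm] at hsep
      nlinarith
    rw [CD_shift_sum, hAbig', Finset.sum_biUnion hdisj]
    refine Finset.sum_le_sum fun i _ => ?_
    rw [sum_shiftSet, CD_shift_sum]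
    refine Finset.sum_le_sum fun a ha => ?_
    rw [← infDist_shift (a + t) (v i) (B i), ← add_right_comm]
    apply le_infDist_finset _ _ hBbigne
    intro y hy
    obtain ⟨j, q, hq, rfl⟩ := (hmemB y).mp hy
    by_cases hji : j = i
    · subst hji
      exact Metric.infDist_le_dist_of_mem
        (by simp only [shiftSet, Finset.coe_image]; exact ⟨q, by exact_mod_cast hq, rfl⟩)
    · obtain ⟨b0, hb0⟩ := hB i
      have hb0mem : (b0 + v i : EuclideanSpace ℝ (Fin d)) ∈
          (shiftSet (B i) (v i) : Set (EuclideanSpace ℝ (Fin d))) := by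
        simp only [shiftSet, Finset.coe_image]; exact ⟨b0, by exact_mod_cast hb0, rfl⟩
      have hnear : dist (a + v i + t) (b0 + v i) ≤ Δ + U/4 := by
        rw [dist_eq_norm]
        have hrew : a + v i + t - (b0 + v i) = (a - b0) + t := by abel
        rw [hrew]
        calc ‖(a - b0 : EuclideanSpace ℝ (Fin d)) + t‖ ≤ ‖(a - b0 : EuclideanSpace ℝ (Fin d))‖ + ‖t‖ :=
            norm_add_le _ _
          _ ≤ Δ + U/4 := by
              have := hAB_dist i i a ha b0 hb0
              rw [dist_eq_norm] at this
              linarith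
      have hfar2 : 3*U/4 - Δ ≤ dist (a + v i + t) (q + v j) := by
        rw [dist_eq_norm]
        have hrew : a + v i + t - (q + v j) = (v i + t - v j) + (a - q) := by abel
        rw [hrew]
        have h1 := sub_norm_le_norm_add (v i + t - v j) ((a : EuclideanSpace ℝ (Fin d)) - q)
        have h2 : ‖v i - v j‖ - ‖t‖ ≤ ‖v i + t - v j‖ := by
          have hrew2 : v i + t - v j = (v i - v j) + t := by abel
          rw [hrew2]; exact sub_norm_le_norm_add _ _
        have h4 : ‖(a : EuclideanSpace ℝ (Fin d)) - q‖ ≤ Δ := by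
          have := hAB_dist i j a ha q hq
          rwa [dist_eq_norm] at this
        have h3' : U ≤ ‖v i - v j‖ := hvsep i j (by intro h; exact hji h.symm)
        linarith
      calc Metric.infDist (a + v i + t)
            ((shiftSet (B i) (v i) : Set (EuclideanSpace ℝ (Fin d))))
          ≤ dist (a + v i + t) (b0 + v i) := Metric.infDist_le_dist_of_mem hb0mem
        _ ≤ Δ + U/4 := hnear
        _ ≤ 3*U/4 - Δ := by linarith
        _ ≤ dist (a + v i + t) (q + v j) := hfar2
  -- the lower bound for part 1
  have lower : ∀ t : EuclideanSpace ℝ (Fin d),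
      (⨅ s : EuclideanSpace ℝ (Fin d), ∑ i, CD (shiftSet (A i) s) (B i))
      ≤ CD (shiftSet Abig t) Bbig := by
    intro t
    rcases eq_or_lt_of_le hΔ0 with hΔz | hΔpos
    · calc (⨅ s : EuclideanSpace ℝ (Fin d), ∑ i, CD (shiftSet (A i) s) (B i))
          ≤ (n : ℝ) * Δ := hinf_le
        _ = 0 := by rw [← hΔz, mul_zero]
        _ ≤ _ := CD_nonneg _ _
    · by_cases hfar : ∃ i, ∀ j, U/4 < ‖v i + t - v j‖
      · calc (⨅ s : EuclideanSpace ℝ (Fin d), ∑ i, CD (shiftSet (A i) s) (B i))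
            ≤ (n : ℝ) * Δ := hinf_le
          _ ≤ U/4 - Δ := by rw [hU]; nlinarith
          _ ≤ _ := hfarbound t hfar
      · push_neg at hfar
        exact le_trans (ciInf_le bdd2 t) (hnear_lower t hΔpos (hsmall t hfar))
  constructor
  · exact le_antisymm (le_ciInf fun t => le_trans (ciInf_le bdd1 t) (upper t))
      (le_ciInf lower)
  · intro t hopt i a ha b hb hmin
    have hvi : (U * ((i : ℕ) + 1)) • e₁ = v i := rfl
    rw [hvi] at hmin ⊢
    rcases eq_or_lt_of_le hΔ0 with hΔz | hΔpos
    · -- degenerate case Δ = 0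
      have hU0' : U = 0 := by rw [hU, ← hΔz, mul_zero]
      obtain ⟨j, q, hq, rfl⟩ := (hmemB b).mp hb
      obtain ⟨b0, hb0⟩ := hB i
      have hqb0 : q = b0 := by
        have h := hgad q (hGB j q hq) b0 (hGB i b0 hb0)
        rw [← hΔz] at h
        exact dist_le_zero.mp h
      have hvz : ∀ m : Fin k, v m = 0 := by
        intro m; simp [hvdef, hU0']
      refine Finset.mem_image.mpr ⟨b0, hb0, ?_⟩
      rw [hvz i, hvz j, hqb0]
    · -- nondegenerate case
      have hCDle : CD (shiftSet Abig t) Bbig ≤ n * Δ := hopt ▸ hCDuT_le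
      have hnotfar : ¬ ∃ i0, ∀ j, U/4 < ‖v i0 + t - v j‖ := by
        intro hfar
        have h1 := hfarbound t hfar
        rw [hU] at h1
        nlinarith [hCDle, hn2, hΔpos, hΔ0]
      push_neg at hnotfar
      have ht := hsmall t hnotfar
      obtain ⟨j, q, hq, rfl⟩ := (hmemB b).mp hb
      by_cases hji : j = i
      · subst hji; exact Finset.mem_image.mpr ⟨q, hq, rfl⟩
      · exfalso
        obtain ⟨b0, hb0⟩ := hB i
        have hb0mem : (b0 + v i : EuclideanSpace ℝ (Fin d)) ∈ Bbig :=
          (hmemB _).mpr ⟨i, b0, hb0, rfl⟩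
        have h1 := hmin (b0 + v i) hb0mem
        have hnear : ‖a + v i + t - (b0 + v i)‖ ≤ Δ + U/4 := by
          have hrew : a + v i + t - (b0 + v i) = (a - b0) + t := by abel
          rw [hrew]
          calc ‖(a - b0 : EuclideanSpace ℝ (Fin d)) + t‖
              ≤ ‖(a - b0 : EuclideanSpace ℝ (Fin d))‖ + ‖t‖ := norm_add_le _ _
            _ ≤ Δ + U/4 := by
                have := hAB_dist i i a ha b0 hb0
                rw [dist_eq_norm] at this
                linarith
        have hfar2 : 3*U/4 - Δ ≤ ‖a + v i + t - (q + v j)‖ := by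
          have hrew : a + v i + t - (q + v j) = (v i + t - v j) + (a - q) := by abel
          rw [hrew]
          have hh1 := sub_norm_le_norm_add (v i + t - v j) ((a : EuclideanSpace ℝ (Fin d)) - q)
          have hh2 : ‖v i - v j‖ - ‖t‖ ≤ ‖v i + t - v j‖ := by
            have hrew2 : v i + t - v j = (v i - v j) + t := by abel
            rw [hrew2]; exact sub_norm_le_norm_add _ _
          have hh3 : U ≤ ‖v i - v j‖ := hvsep i j (by intro h; exact hji h.symm)
          have hh4 : ‖(a : EuclideanSpace ℝ (Fin d)) - q‖ ≤ Δ := by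
            have := hAB_dist i j a ha q hq
            rwa [dist_eq_norm] at this
          linarith
        rw [hU] at hnear hfar2
        nlinarith [h1, hnear, hfar2, hn2, hΔpos]
end
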